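/- Let p ∈ (0,1) and let F, G ∈ F_1^+ be cumulative distribution functions. Then the extended gap functional coincides with the gap functional: ∫_{F^{-1}(p)}^{G^{-1}(p)} (p − G(x)) dx = ∫_p^1 (F^{-1}(u) − G^{-1}(u)) du − ∫_{F^{-1}(p)}^∞ (G(x) − F(x)) dx. -/

import Mathlib

open MeasureTheory ProbabilityTheory Filter Set
open scoped ENNReal NNReal

/-- The cumulative distribution function of a probability measure `μ` on `ℝ`. -/
noncomputable def cdfOf (μ : Measure ℝ) : ℝ → ℝ := fun x => (μ (Iic x)).toReal

/-- The quantile function of a cdf `F`: `F⁻¹(p) = inf {x : F x ≥ p}`. -/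
noncomputable def qtl (F : ℝ → ℝ) (p : ℝ) : ℝ := sInf {x | p ≤ F x}

variable (μ : Measure ℝ) [IsProbabilityMeasure μ]

lemma cdfOf_eq : cdfOf μ = cdf μ := funext fun x => (cdf_eq_real μ x).symm

lemma qtl_le_iff {u : ℝ} (hu : u ∈ Ioo (0:ℝ) 1) (x : ℝ) :
    qtl (cdfOf μ) u ≤ x ↔ u ≤ cdfOf μ x := by
  rw [cdfOf_eq]
  set F := cdf μ with hF
  set S : Set ℝ := {y | u ≤ F y} with hS
  have hne : S.Nonempty := by
    have h := Filter.Tendsto.eventually_const_le hu.2 (tendsto_cdf_atTop μ)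
    obtain ⟨y, hy⟩ := h.exists
    exact ⟨y, hy⟩
  have hbdd : BddBelow S := by
    have h := Filter.Tendsto.eventually_lt_const hu.1 (tendsto_cdf_atBot μ)
    obtain ⟨y, hy⟩ := h.exists
    refine ⟨y, fun z hz => ?_⟩
    by_contra hzy
    push_neg at hzy
    exact absurd (le_trans hz (F.mono hzy.le)) (not_le.mpr hy)
  have hmem : u ≤ F (sInf S) := by
    refine le_of_forall_pos_le_add fun ε hε => ?_
    have hrc : ContinuousWithinAt F (Ici (sInf S)) (sInf S) := F.right_continuous _
    have h1 : ∀ᶠ y in nhdsWithin (sInf S) (Ici (sInf S)), F y < F (sInf S) + ε :=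
      hrc (Iio_mem_nhds (lt_add_of_pos_right _ hε))
    rw [eventually_iff, mem_nhdsGE_iff_exists_Ico_subset] at h1
    obtain ⟨t, ht, hsub⟩ := h1
    obtain ⟨s, hsS, hst⟩ := exists_lt_of_csInf_lt hne ht
    have : F s < F (sInf S) + ε := hsub ⟨csInf_le hbdd hsS, hst⟩
    exact le_trans hsS this.le
  show sInf S ≤ x ↔ u ≤ F x
  constructor
  · exact fun h => le_trans hmem (F.mono h)
  · exact fun h => csInf_le hbdd h

example : 1 = 1 := rfl

lemma qtl_mono {u v : ℝ} (hu : u ∈ Ioo (0:ℝ) 1) (hv : v ∈ Ioo (0:ℝ) 1) (huv : u ≤ v) :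
    qtl (cdfOf μ) u ≤ qtl (cdfOf μ) v := by
  rw [qtl_le_iff μ hu]
  exact le_trans huv ((qtl_le_iff μ hv _).mp le_rfl)

lemma cdf_lt_iff {u : ℝ} (hu : u ∈ Ioo (0:ℝ) 1) (x : ℝ) :
    cdfOf μ x < u ↔ x < qtl (cdfOf μ) u := by
  rw [← not_le, ← not_le, qtl_le_iff μ hu]

/-- layer cake: the tail integral is finite. -/
lemma tail_lintegral_lt_top (hμ : Integrable (fun x => max x 0) μ) (c : ℝ) :
    ∫⁻ x in Ioi c, μ (Ioi x) < ⊤ := by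
  set f : ℝ → ℝ := fun x => max (x - c) 0 with hf
  have hfint : Integrable f μ := by
    refine Integrable.mono' (hμ.add (integrable_const |c|))
      ((measurable_id.sub measurable_const).max measurable_const).aestronglyMeasurable
      (Eventually.of_forall fun x => ?_)
    simp only [hf, Pi.add_apply, Real.norm_eq_abs, abs_of_nonneg (le_max_right (x - c) 0)]
    rcases le_total (x - c) 0 with h | h
    · rw [max_eq_right h]
      have h1 : (0:ℝ) ≤ max x 0 := le_max_right _ _
      have h2 : (0:ℝ) ≤ |c| := abs_nonneg c
      linarith
    · rw [max_eq_left h]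
      have h1 : x ≤ max x 0 := le_max_left _ _
      have h2 : -c ≤ |c| := neg_le_abs c
      linarith
  have key := lintegral_eq_lintegral_meas_lt μ (f := f)
    (Eventually.of_forall fun x => le_max_right _ _) hfint.aemeasurable
  have hlt : ∫⁻ x, ENNReal.ofReal (f x) ∂μ < ⊤ := by
    have := hfint.2
    rw [hasFiniteIntegral_iff_norm] at this
    refine lt_of_le_of_lt (lintegral_mono fun x => ?_) this
    exact ENNReal.ofReal_le_ofReal (le_abs_self _)
  rw [key] at hlt
  have heq : ∀ t ∈ Ioi (0:ℝ), μ {a : ℝ | t < f a} = μ (Ioi (c + t)) := by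
    intro t ht
    congr 1
    ext a
    simp only [mem_setOf_eq, mem_Ioi, hf, lt_max_iff]
    constructor
    · rintro (h | h)
      · linarith
      · exact absurd ht (by simpa using h.le)
    · intro h; left; linarith
  rw [setLIntegral_congr_fun measurableSet_Ioi heq] at hlt
  have hmp : MeasurePreserving (fun t : ℝ => c + t) volume volume := measurePreserving_add_left volume c
  have := hmp.setLIntegral_comp_preimage_emb (measurableEmbedding_addLeft c) (fun x => μ (Ioi x)) (Ioi c)
  have hpre : (fun t : ℝ => c + t) ⁻¹' (Ioi c) = Ioi 0 := by
    ext t; simp [mem_Ioi]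
  rw [hpre] at this
  rwa [← this]

lemma ofReal_one_sub_cdf (x : ℝ) : ENNReal.ofReal (1 - cdfOf μ x) = μ (Ioi x) := by
  have h1 : μ (Ioi x) = 1 - μ (Iic x) := by
    rw [← compl_Iic, measure_compl measurableSet_Iic (measure_ne_top μ _), measure_univ]
  rw [h1, cdfOf]
  rw [ENNReal.ofReal_sub _ ENNReal.toReal_nonneg, ENNReal.ofReal_one,
    ENNReal.ofReal_toReal (measure_ne_top μ _)]

lemma cdf_measurable : Measurable (cdfOf μ) := by
  rw [cdfOf_eq]; exact (monotone_cdf μ).measurable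

/-- Key Tonelli identity. -/
lemma key_lintegral {p : ℝ} (hp : p ∈ Ioo (0:ℝ) 1) :
    ∫⁻ u in Ioo p 1, ENNReal.ofReal (qtl (cdfOf μ) u - qtl (cdfOf μ) p)
      = ∫⁻ x in Ioi (qtl (cdfOf μ) p), ENNReal.ofReal (1 - cdfOf μ x) := by
  set F := cdfOf μ with hF
  set a := qtl F p with ha
  set s : Set (ℝ × ℝ) := {q | F q.2 < q.1} with hs
  have hsm : MeasurableSet s := measurableSet_lt ((cdf_measurable μ).comp measurable_snd) measurable_fst
  have hmbl : AEMeasurable (Function.uncurry fun u x => s.indicator (fun _ => (1:ℝ≥0∞)) (u, x))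
      ((volume.restrict (Ioo p 1)).prod (volume.restrict (Ioi a))) := by
    have : (Function.uncurry fun u x => s.indicator (fun _ => (1:ℝ≥0∞)) (u, x))
        = s.indicator (fun _ => (1:ℝ≥0∞)) := by
      ext q; rfl
    rw [this]
    exact (measurable_indicator_const_iff 1).mpr hsm |>.aemeasurable
  have swap := lintegral_lintegral_swap hmbl
  have lhs_eq : ∫⁻ u in Ioo p 1, ∫⁻ x in Ioi a, s.indicator (fun _ => (1:ℝ≥0∞)) (u, x)
      = ∫⁻ u in Ioo p 1, ENNReal.ofReal (qtl F u - a) := by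
    refine setLIntegral_congr_fun measurableSet_Ioo (fun u hu => ?_)
    have hu' : u ∈ Ioo (0:ℝ) 1 := ⟨lt_trans hp.1 hu.1, hu.2⟩
    have hind : ∀ x : ℝ, s.indicator (fun _ => (1:ℝ≥0∞)) (u, x)
        = (Iio (qtl F u)).indicator (fun _ => (1:ℝ≥0∞)) x := by
      intro x
      have : (u, x) ∈ s ↔ x ∈ Iio (qtl F u) := by
        simp only [hs, mem_setOf_eq, mem_Iio]
        exact cdf_lt_iff μ hu' x
      by_cases h : (u, x) ∈ s
      · rw [indicator_of_mem h, indicator_of_mem (this.mp h)]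
      · rw [indicator_of_notMem h, indicator_of_notMem (fun hx => h (this.mpr hx))]
    simp_rw [hind]
    rw [lintegral_indicator measurableSet_Iio _]
    simp only [lintegral_const, Measure.restrict_restrict measurableSet_Iio,
      Measure.restrict_apply MeasurableSet.univ, univ_inter, one_mul]
    have : Iio (qtl F u) ∩ Ioi a = Ioo a (qtl F u) := by
      ext y; simp [mem_Ioo, mem_Iio, mem_Ioi, and_comm]
    rw [this, Real.volume_Ioo]
  have rhs_eq : ∫⁻ x in Ioi a, ∫⁻ u in Ioo p 1, s.indicator (fun _ => (1:ℝ≥0∞)) (u, x)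
      = ∫⁻ x in Ioi a, ENNReal.ofReal (1 - F x) := by
    refine setLIntegral_congr_fun measurableSet_Ioi (fun x hx => ?_)
    have hFx : p ≤ F x := (qtl_le_iff μ hp x).mp (le_of_lt hx)
    have hind : ∀ u : ℝ, s.indicator (fun _ => (1:ℝ≥0∞)) (u, x)
        = (Ioi (F x)).indicator (fun _ => (1:ℝ≥0∞)) u := by
      intro u
      have : (u, x) ∈ s ↔ u ∈ Ioi (F x) := Iff.rfl
      by_cases h : (u, x) ∈ s
      · rw [indicator_of_mem h, indicator_of_mem (this.mp h)]
      · rw [indicator_of_notMem h, indicator_of_notMem (fun hu => h (this.mpr hu))]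
    simp_rw [hind]
    rw [lintegral_indicator measurableSet_Ioi _]
    simp only [lintegral_const, Measure.restrict_restrict measurableSet_Ioi,
      Measure.restrict_apply MeasurableSet.univ, univ_inter, one_mul]
    have hF1 : F x ≤ 1 := by
      rw [hF, cdfOf_eq]; exact cdf_le_one μ x
    have : Ioi (F x) ∩ Ioo p 1 = Ioo (F x) 1 := by
      ext y
      simp only [mem_inter_iff, mem_Ioi, mem_Ioo]
      constructor
      · rintro ⟨h1, _, h3⟩; exact ⟨h1, h3⟩
      · rintro ⟨h1, h2⟩; exact ⟨h1, lt_of_le_of_lt hFx h1, h2⟩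
    rw [this, Real.volume_Ioo]
  rw [← lhs_eq, ← rhs_eq, swap]

lemma integrableOn_one_sub_cdf (hμ : Integrable (fun x => max x 0) μ) (c : ℝ) :
    IntegrableOn (fun x => 1 - cdfOf μ x) (Ioi c) := by
  constructor
  · exact (measurable_const.sub (cdf_measurable μ)).aestronglyMeasurable
  · rw [hasFiniteIntegral_iff_norm]
    have heq : ∀ x ∈ Ioi c, ENNReal.ofReal ‖1 - cdfOf μ x‖ = μ (Ioi x) := by
      intro x _
      rw [Real.norm_eq_abs, abs_of_nonneg (by
        rw [sub_nonneg, cdfOf_eq]; exact cdf_le_one μ x), ofReal_one_sub_cdf]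
    rw [setLIntegral_congr_fun measurableSet_Ioi heq]
    exact tail_lintegral_lt_top μ hμ c

lemma qtl_monotoneOn {p : ℝ} (hp : p ∈ Ioo (0:ℝ) 1) :
    MonotoneOn (qtl (cdfOf μ)) (Ioo p 1) := fun u hu v hv huv =>
  qtl_mono μ ⟨lt_trans hp.1 hu.1, hu.2⟩ ⟨lt_trans hp.1 hv.1, hv.2⟩ huv

lemma qtl_sub_nonneg {p : ℝ} (hp : p ∈ Ioo (0:ℝ) 1) :
    ∀ u ∈ Ioo p 1, 0 ≤ qtl (cdfOf μ) u - qtl (cdfOf μ) p := by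
  intro u hu
  rw [sub_nonneg]
  exact qtl_mono μ hp ⟨lt_trans hp.1 hu.1, hu.2⟩ hu.1.le

lemma integrableOn_qtl_sub (hμ : Integrable (fun x => max x 0) μ) {p : ℝ}
    (hp : p ∈ Ioo (0:ℝ) 1) :
    IntegrableOn (fun u => qtl (cdfOf μ) u - qtl (cdfOf μ) p) (Ioo p 1) := by
  constructor
  · exact ((aemeasurable_restrict_of_monotoneOn measurableSet_Ioo
      (qtl_monotoneOn μ hp)).sub aemeasurable_const).aestronglyMeasurable
  · rw [hasFiniteIntegral_iff_norm]
    have heq : ∀ u ∈ Ioo p 1, ENNReal.ofReal ‖qtl (cdfOf μ) u - qtl (cdfOf μ) p‖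
        = ENNReal.ofReal (qtl (cdfOf μ) u - qtl (cdfOf μ) p) := by
      intro u hu
      rw [Real.norm_eq_abs, abs_of_nonneg (qtl_sub_nonneg μ hp u hu)]
    rw [setLIntegral_congr_fun measurableSet_Ioo heq, key_lintegral μ hp]
    have heq2 : ∀ x ∈ Ioi (qtl (cdfOf μ) p), ENNReal.ofReal (1 - cdfOf μ x) = μ (Ioi x) :=
      fun x _ => ofReal_one_sub_cdf μ x
    rw [setLIntegral_congr_fun measurableSet_Ioi heq2]
    exact tail_lintegral_lt_top μ hμ _

lemma integrableOn_qtl (hμ : Integrable (fun x => max x 0) μ) {p : ℝ}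
    (hp : p ∈ Ioo (0:ℝ) 1) : IntegrableOn (qtl (cdfOf μ)) (Ioo p 1) := by
  have hc : IntegrableOn (fun _ : ℝ => qtl (cdfOf μ) p) (Ioo p 1) :=
    (integrableOn_const_iff).mpr (Or.inr (by rw [Real.volume_Ioo]; exact ENNReal.ofReal_lt_top))
  have h := (integrableOn_qtl_sub μ hμ hp).add hc
  exact h.congr (Eventually.of_forall fun u => by simp)

lemma qtl_integral_eq (hμ : Integrable (fun x => max x 0) μ) {p : ℝ}
    (hp : p ∈ Ioo (0:ℝ) 1) :
    ∫ u in p..1, qtl (cdfOf μ) u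
      = qtl (cdfOf μ) p * (1 - p) + ∫ x in Ioi (qtl (cdfOf μ) p), (1 - cdfOf μ x) := by
  set a := qtl (cdfOf μ) p with ha
  have hnn1 : 0 ≤ᵐ[volume.restrict (Ioo p 1)] fun u => qtl (cdfOf μ) u - a :=
    (ae_restrict_iff' measurableSet_Ioo).mpr (Eventually.of_forall (qtl_sub_nonneg μ hp))
  have hnn2 : 0 ≤ᵐ[volume.restrict (Ioi a)] fun x => 1 - cdfOf μ x :=
    Eventually.of_forall fun x => by rw [Pi.zero_apply, sub_nonneg, cdfOf_eq]; exact cdf_le_one μ x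
  have E1 : ∫ u in Ioo p 1, (qtl (cdfOf μ) u - a) = ∫ x in Ioi a, (1 - cdfOf μ x) := by
    rw [integral_eq_lintegral_of_nonneg_ae hnn1 (integrableOn_qtl_sub μ hμ hp).1,
      integral_eq_lintegral_of_nonneg_ae hnn2 (integrableOn_one_sub_cdf μ hμ a).1,
      key_lintegral μ hp]
  have hsplit : ∫ u in Ioo p 1, (qtl (cdfOf μ) u - a)
      = (∫ u in Ioo p 1, qtl (cdfOf μ) u) - (volume (Ioo p 1)).toReal * a := by
    have hc : IntegrableOn (fun _ : ℝ => a) (Ioo p 1) :=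
      (integrableOn_const_iff).mpr (Or.inr (by rw [Real.volume_Ioo]; exact ENNReal.ofReal_lt_top))
    rw [integral_sub (integrableOn_qtl μ hμ hp) hc, setIntegral_const, smul_eq_mul, measureReal_def]
  have hvol : (volume (Ioo p 1)).toReal = 1 - p := by
    rw [Real.volume_Ioo, ENNReal.toReal_ofReal (by linarith [hp.2])]
  rw [intervalIntegral.integral_of_le hp.2.le, integral_Ioc_eq_integral_Ioo]
  rw [hsplit, hvol] at E1
  linarith [E1]

lemma intervalIntegrable_qtl (hμ : Integrable (fun x => max x 0) μ) {p : ℝ}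
    (hp : p ∈ Ioo (0:ℝ) 1) : IntervalIntegrable (qtl (cdfOf μ)) volume p 1 := by
  rw [intervalIntegrable_iff_integrableOn_Ioc_of_le hp.2.le]
  exact (integrableOn_qtl μ hμ hp).congr_set_ae Ioo_ae_eq_Ioc.symm

lemma tail_split (hν : Integrable (fun x => max x 0) μ) (c d : ℝ) :
    ∫ x in c..d, (1 - cdfOf μ x)
      = (∫ x in Ioi c, (1 - cdfOf μ x)) - ∫ x in Ioi d, (1 - cdfOf μ x) := by
  have key : ∀ c d : ℝ, c ≤ d → ∫ x in Ioi c, (1 - cdfOf μ x)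
      = (∫ x in Ioc c d, (1 - cdfOf μ x)) + ∫ x in Ioi d, (1 - cdfOf μ x) := by
    intro c d h
    rw [← setIntegral_union (by rw [Set.disjoint_left]; intro x hx hx'; exact absurd hx.2 (not_le.mpr hx'))
      measurableSet_Ioi ((integrableOn_one_sub_cdf μ hν c).mono_set Ioc_subset_Ioi_self)
      (integrableOn_one_sub_cdf μ hν d), Ioc_union_Ioi_eq_Ioi h]
  rcases le_total c d with h | h
  · rw [intervalIntegral.integral_of_le h]
    linarith [key c d h]
  · rw [intervalIntegral.integral_symm, intervalIntegral.integral_of_le h]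
    linarith [key d c h]


/-- for `p ∈ (0,1)` and cdf's `F, G ∈ F₁⁺`, the extended gap functional
coincides with the gap functional:
`∫_{F⁻¹(p)}^{G⁻¹(p)} (p − G(x)) dx
  = ∫_p^1 (F⁻¹(u) − G⁻¹(u)) du − ∫_{F⁻¹(p)}^∞ (G(x) − F(x)) dx`,
where the left-hand integral is an oriented (interval) integral. -/
theorem stmt6 (μ ν : Measure ℝ) [IsProbabilityMeasure μ] [IsProbabilityMeasure ν]
    (hμ : Integrable (fun x => max x 0) μ) (hν : Integrable (fun x => max x 0) ν)
    (p : ℝ) (hp : p ∈ Ioo (0 : ℝ) 1) :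
    (∫ x in (qtl (cdfOf μ) p)..(qtl (cdfOf ν) p), (p - cdfOf ν x)) =
      (∫ u in p..1, (qtl (cdfOf μ) u - qtl (cdfOf ν) u)) -
        ∫ x in Ioi (qtl (cdfOf μ) p), (cdfOf ν x - cdfOf μ x) := by
  set a := qtl (cdfOf μ) p with ha
  set b := qtl (cdfOf ν) p with hb
  -- split the quantile integral
  have hsplit : ∫ u in p..1, (qtl (cdfOf μ) u - qtl (cdfOf ν) u)
      = (∫ u in p..1, qtl (cdfOf μ) u) - ∫ u in p..1, qtl (cdfOf ν) u :=
    intervalIntegral.integral_sub (intervalIntegrable_qtl μ hμ hp) (intervalIntegrable_qtl ν hν hp)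
  -- tail difference
  have htail : ∫ x in Ioi a, (cdfOf ν x - cdfOf μ x)
      = (∫ x in Ioi a, (1 - cdfOf μ x)) - ∫ x in Ioi a, (1 - cdfOf ν x) := by
    rw [← integral_sub (integrableOn_one_sub_cdf μ hμ a) (integrableOn_one_sub_cdf ν hν a)]
    exact setIntegral_congr_fun measurableSet_Ioi (fun x _ => by ring)
  -- left-hand side
  have hGint : IntervalIntegrable (fun x => 1 - cdfOf ν x) volume a b := by
    rw [intervalIntegrable_iff]
    exact (integrableOn_one_sub_cdf ν hν (min a b)).mono_set
      (fun x hx => hx.1)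
  have hlhs : ∫ x in a..b, (p - cdfOf ν x)
      = (∫ x in a..b, (1 - cdfOf ν x)) - (b - a) * (1 - p) := by
    have h1 : ∫ x in a..b, (p - cdfOf ν x)
        = ∫ x in a..b, ((1 - cdfOf ν x) - (1 - p)) :=
      intervalIntegral.integral_congr (fun x _ => by ring)
    rw [h1, intervalIntegral.integral_sub hGint intervalIntegrable_const,
      intervalIntegral.integral_const, smul_eq_mul]
  rw [hsplit, htail, hlhs, tail_split ν hν a b,
    qtl_integral_eq μ hμ hp, qtl_integral_eq ν hν hp, ← ha, ← hb]
  ring
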